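/- arXiv:2010.11876 — 6 statements merged into one kernel-verified Lean document; each statement's English description precedes it below -/
import Mathlib

section
/- (State distribution discrepancy bound) For two policies $\pi$ and $\pi_E$ on a finite MDP with discount factor $\gamma \in [0,1)$, the total variation distance between their discounted stationary state distributions satisfies $D_{TV}(d_\pi, d_{\pi_E}) \le \frac{\gamma}{1-\gamma} \mathbb{E}_{s \sim d_{\pi_E}}[D_{TV}(\pi(\cdot|s), \pi_E(\cdot|s))]$. -/
/-!
Both discounted occupancies solve a Bellman flow equation `d = (1 - γ) d₀ + γ P d`. Subtracting
the two equations gives `dπ - dE = γ Pπ (dπ - dE) + γ (Pπ - PE) dE`; since the column-stochastic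
`Pπ` is an `ℓ¹` contraction, `(1 - γ) ‖dπ - dE‖₁ ≤ γ ‖(Pπ - PE) dE‖₁`, and the last norm is at most
`∑ s, dE s ‖π(·|s) - πE(·|s)‖₁` because each `M(·|s,a)` is a probability vector.
-/

open Matrix Finset

namespace Matrix

variable {S : Type*} [Fintype S]

theorem sum_abs_mulVec_le (P : Matrix S S ℝ) (v : S → ℝ) :
    ∑ i, |(P *ᵥ v) i| ≤ ∑ j, |v j| * ∑ i, |P i j| :=
  calc ∑ i, |(P *ᵥ v) i| ≤ ∑ i, ∑ j, |P i j| * |v j| :=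
        sum_le_sum fun i _ => (abs_sum_le_sum_abs _ _).trans_eq (by simp only [abs_mul])
    _ = ∑ j, |v j| * ∑ i, |P i j| := by
        rw [sum_comm]
        simp only [mul_sum, mul_comm]

variable [DecidableEq S]

theorem sum_abs_mulVec_le_of_mem_colStochastic {P : Matrix S S ℝ} (hP : P ∈ colStochastic ℝ S)
    (v : S → ℝ) : ∑ i, |(P *ᵥ v) i| ≤ ∑ i, |v i| :=
  (sum_abs_mulVec_le P v).trans_eq <| sum_congr rfl fun j _ => by
    simp only [abs_of_nonneg (nonneg_of_mem_colStochastic hP), sum_col_of_mem_colStochastic hP,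
      mul_one]

end Matrix

section DiscountedOccupancy

variable {S : Type*} [Fintype S] [DecidableEq S] {P : Matrix S S ℝ} {γ : ℝ}

noncomputable def discountedOccupancy (P : Matrix S S ℝ) (γ : ℝ) (d₀ : S → ℝ) : S → ℝ :=
  fun s => (1 - γ) * ∑' t : ℕ, γ ^ t * (P ^ t *ᵥ d₀) s

theorem summable_discounted_pow_mulVec (hP : P ∈ colStochastic ℝ S) (hγ0 : 0 ≤ γ) (hγ1 : γ < 1)
    (d₀ : S → ℝ) (s : S) : Summable fun t : ℕ => γ ^ t * (P ^ t *ᵥ d₀) s := by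
  refine .of_norm_bounded ((summable_geometric_of_lt_one hγ0 hγ1).mul_right (∑ i, |d₀ i|))
    fun t => ?_
  have hPt : |(P ^ t *ᵥ d₀) s| ≤ ∑ i, |d₀ i| :=
    (single_le_sum (fun i _ => abs_nonneg ((P ^ t *ᵥ d₀) i)) (mem_univ s)).trans
      (sum_abs_mulVec_le_of_mem_colStochastic (pow_mem hP t) d₀)
  rw [Real.norm_eq_abs, abs_mul, abs_of_nonneg (pow_nonneg hγ0 t)]
  exact mul_le_mul_of_nonneg_left hPt (pow_nonneg hγ0 t)

theorem discountedOccupancy_nonneg {d₀ : S → ℝ} (hP : P ∈ colStochastic ℝ S) (hγ0 : 0 ≤ γ) (hγ1 : γ < 1)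
    (hd₀ : ∀ s, 0 ≤ d₀ s) (s : S) : 0 ≤ discountedOccupancy P γ d₀ s :=
  mul_nonneg (sub_nonneg.2 hγ1.le) <| tsum_nonneg fun t =>
    mul_nonneg (pow_nonneg hγ0 t) (nonneg_mulVec_of_mem_colStochastic (pow_mem hP t) hd₀ s)

theorem discountedOccupancy_flow_eq (hP : P ∈ colStochastic ℝ S) (hγ0 : 0 ≤ γ) (hγ1 : γ < 1)
    (d₀ : S → ℝ) (s : S) :
    discountedOccupancy P γ d₀ s
      = (1 - γ) * d₀ s + γ * (P *ᵥ discountedOccupancy P γ d₀) s := by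
  set f : ℕ → S → ℝ := fun t s => γ ^ t * (P ^ t *ᵥ d₀) s
  have hsum : ∀ s, Summable (f · s) := summable_discounted_pow_mulVec hP hγ0 hγ1 d₀
  have hstep : ∀ t, f (t + 1) s = ∑ s', γ * (P s s' * f t s') := fun t => by
    simp only [f, pow_succ', ← mulVec_mulVec]
    rw [mulVec, dotProduct, mul_sum]
    exact sum_congr rfl fun s' _ => by ring
  have hshift : ∑' t, f (t + 1) s = ∑ s', γ * (P s s' * ∑' t, f t s') := by
    simp only [hstep, ← tsum_mul_left]
    exact Summable.tsum_finsetSum fun s' _ => ((hsum s').mul_left _).mul_left _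
  calc discountedOccupancy P γ d₀ s = (1 - γ) * (f 0 s + ∑' t, f (t + 1) s) :=
        congrArg _ (hsum s).tsum_eq_zero_add
    _ = (1 - γ) * d₀ s + γ * ∑ s', P s s' * ((1 - γ) * ∑' t, f t s') := by
        rw [hshift, mul_add, mul_sum, mul_sum]
        simp only [f, pow_zero, one_mulVec, one_mul]
        exact congrArg _ (sum_congr rfl fun s' _ => by ring)

theorem sum_abs_sub_le_of_flow_eq {Q : Matrix S S ℝ} {d₀ d d' : S → ℝ}
    (hP : P ∈ colStochastic ℝ S) (hγ0 : 0 ≤ γ) (hγ1 : γ < 1)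
    (hd : ∀ s, d s = (1 - γ) * d₀ s + γ * (P *ᵥ d) s)
    (hd' : ∀ s, d' s = (1 - γ) * d₀ s + γ * (Q *ᵥ d') s) :
    ∑ s, |d s - d' s| ≤ γ / (1 - γ) * ∑ s, |((P - Q) *ᵥ d') s| := by
  set e := d - d'
  set q := (P - Q) *ᵥ d'
  show ∑ s, |e s| ≤ γ / (1 - γ) * ∑ s, |q s|
  have he : ∀ s, e s = γ * (P *ᵥ e) s + γ * q s := fun s => by
    simp only [e, q, mulVec_sub, sub_mulVec, Pi.sub_apply]
    linarith [hd s, hd' s]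
  have hbound : ∑ s, |e s| ≤ γ * ∑ s, |e s| + γ * ∑ s, |q s| :=
    calc ∑ s, |e s| ≤ ∑ s, (γ * |(P *ᵥ e) s| + γ * |q s|) := sum_le_sum fun s _ => by
          rw [he s]
          exact (abs_add_le _ _).trans_eq (by rw [abs_mul, abs_mul, abs_of_nonneg hγ0])
      _ ≤ γ * ∑ s, |e s| + γ * ∑ s, |q s| := by
          rw [sum_add_distrib, ← mul_sum, ← mul_sum]
          gcongr γ * ?_ + _
          exact sum_abs_mulVec_le_of_mem_colStochastic hP e
  rw [div_mul_eq_mul_div, le_div_iff₀ (sub_pos.2 hγ1)]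
  linarith

end DiscountedOccupancy

section PolicyTransition

variable {S A : Type*} [Fintype A] (M : S → A → S → ℝ)

def policyTransition (π : S → A → ℝ) : Matrix S S ℝ :=
  fun s' s => ∑ a, π s a * M s a s'

variable {M}

theorem policyTransition_mem_colStochastic [Fintype S] [DecidableEq S] {π : S → A → ℝ}
    (hM0 : ∀ s a s', 0 ≤ M s a s') (hM1 : ∀ s a, ∑ s', M s a s' = 1)
    (hπ0 : ∀ s a, 0 ≤ π s a) (hπ1 : ∀ s, ∑ a, π s a = 1) :
    policyTransition M π ∈ colStochastic ℝ S := by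
  refine mem_colStochastic_iff_sum.2
    ⟨fun s' s => sum_nonneg fun a _ => mul_nonneg (hπ0 s a) (hM0 s a s'), fun s => ?_⟩
  simp only [policyTransition]
  rw [sum_comm]
  simp only [← mul_sum, hM1, mul_one, hπ1]

theorem policyTransition_sub (π π' : S → A → ℝ) :
    policyTransition M π - policyTransition M π' = policyTransition M (π - π') := by
  ext s' s
  simp only [policyTransition, Matrix.sub_apply, Pi.sub_apply, sub_mul, sum_sub_distrib]

theorem sum_abs_policyTransition_le [Fintype S] (hM0 : ∀ s a s', 0 ≤ M s a s')
    (hM1 : ∀ s a, ∑ s', M s a s' = 1) (f : S → A → ℝ) (s : S) :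
    ∑ s', |policyTransition M f s' s| ≤ ∑ a, |f s a| :=
  calc ∑ s', |policyTransition M f s' s| ≤ ∑ s', ∑ a, |f s a| * M s a s' :=
        sum_le_sum fun s' _ => (abs_sum_le_sum_abs _ _).trans_eq <| sum_congr rfl fun a _ => by
          rw [abs_mul, abs_of_nonneg (hM0 s a s')]
    _ = ∑ a, |f s a| := by
        rw [sum_comm]
        simp only [← mul_sum, hM1, mul_one]

end PolicyTransition

theorem state_dist_discrepancy_general
    {S A : Type*} [Fintype S] [Fintype A] [DecidableEq S]
    (M : S → A → S → ℝ) (π πE : S → A → ℝ) (d0 : S → ℝ) (γ : ℝ)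
    (hγ0 : 0 ≤ γ) (hγ1 : γ < 1)
    (hM0 : ∀ s a s', 0 ≤ M s a s') (hM1 : ∀ s a, ∑ s', M s a s' = 1)
    (hπ0 : ∀ s a, 0 ≤ π s a) (hπ1 : ∀ s, ∑ a, π s a = 1)
    (hπE0 : ∀ s a, 0 ≤ πE s a) (hπE1 : ∀ s, ∑ a, πE s a = 1)
    (hd00 : ∀ s, 0 ≤ d0 s)
    (Pπ PE : Matrix S S ℝ)
    (hPπ : ∀ s' s, Pπ s' s = ∑ a, π s a * M s a s')
    (hPE : ∀ s' s, PE s' s = ∑ a, πE s a * M s a s')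
    (dπ dE : S → ℝ)
    (hdπ : ∀ s, dπ s = (1 - γ) * ∑' t : ℕ, γ ^ t * ((Pπ ^ t).mulVec d0 s))
    (hdE : ∀ s, dE s = (1 - γ) * ∑' t : ℕ, γ ^ t * ((PE ^ t).mulVec d0 s)) :
    (1 / 2) * ∑ s, |dπ s - dE s|
      ≤ (γ / (1 - γ)) * ∑ s, dE s * ((1 / 2) * ∑ a, |π s a - πE s a|) := by
  have hPπ' : Pπ = policyTransition M π := Matrix.ext hPπ
  have hPE' : PE = policyTransition M πE := Matrix.ext hPE
  have hPπS : Pπ ∈ colStochastic ℝ S := hPπ' ▸ policyTransition_mem_colStochastic hM0 hM1 hπ0 hπ1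
  have hPES : PE ∈ colStochastic ℝ S := hPE' ▸ policyTransition_mem_colStochastic hM0 hM1 hπE0 hπE1
  have hdπ' : dπ = discountedOccupancy Pπ γ d0 := funext hdπ
  have hdE' : dE = discountedOccupancy PE γ d0 := funext hdE
  have hdE0 : ∀ s, 0 ≤ dE s := hdE' ▸ discountedOccupancy_nonneg hPES hγ0 hγ1 hd00
  have hflow : ∑ s, |dπ s - dE s| ≤ γ / (1 - γ) * ∑ s, |((Pπ - PE) *ᵥ dE) s| := by
    rw [hdπ', hdE']
    exact sum_abs_sub_le_of_flow_eq hPπS hγ0 hγ1 (discountedOccupancy_flow_eq hPπS hγ0 hγ1 d0)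
      (discountedOccupancy_flow_eq hPES hγ0 hγ1 d0)
  have hpolicy : ∑ s, |((Pπ - PE) *ᵥ dE) s| ≤ ∑ s, dE s * ∑ a, |π s a - πE s a| := by
    rw [hPπ', hPE', policyTransition_sub]
    refine (sum_abs_mulVec_le _ dE).trans (sum_le_sum fun s _ => ?_)
    rw [abs_of_nonneg (hdE0 s)]
    exact mul_le_mul_of_nonneg_left (sum_abs_policyTransition_le hM0 hM1 _ s) (hdE0 s)
  calc (1 / 2) * ∑ s, |dπ s - dE s|
      ≤ 1 / 2 * (γ / (1 - γ) * ∑ s, dE s * ∑ a, |π s a - πE s a|) := by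
        gcongr
        exact hflow.trans (mul_le_mul_of_nonneg_left hpolicy (div_nonneg hγ0 (by linarith)))
    _ = γ / (1 - γ) * ∑ s, dE s * ((1 / 2) * ∑ a, |π s a - πE s a|) := by
        simp only [mul_sum]
        ring_nf

/-- State distribution discrepancy bound:
`D_TV(d_π, d_πE) ≤ γ/(1-γ) · E_{s ∼ d_πE}[D_TV(π(·|s), πE(·|s))]`. -/
theorem state_dist_discrepancy
    {S A : Type*} [Fintype S] [Fintype A] [DecidableEq S]
    (M : S → A → S → ℝ) (π πE : S → A → ℝ) (d0 : S → ℝ) (γ : ℝ)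
    (hγ0 : 0 ≤ γ) (hγ1 : γ < 1)
    (hM0 : ∀ s a s', 0 ≤ M s a s') (hM1 : ∀ s a, ∑ s', M s a s' = 1)
    (hπ0 : ∀ s a, 0 ≤ π s a) (hπ1 : ∀ s, ∑ a, π s a = 1)
    (hπE0 : ∀ s a, 0 ≤ πE s a) (hπE1 : ∀ s, ∑ a, πE s a = 1)
    (hd00 : ∀ s, 0 ≤ d0 s) (hd01 : ∑ s, d0 s = 1)
    (Pπ PE : Matrix S S ℝ)
    (hPπ : ∀ s' s, Pπ s' s = ∑ a, π s a * M s a s')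
    (hPE : ∀ s' s, PE s' s = ∑ a, πE s a * M s a s')
    (dπ dE : S → ℝ)
    (hdπ : ∀ s, dπ s = (1 - γ) * ∑' t : ℕ, γ ^ t * ((Pπ ^ t).mulVec d0 s))
    (hdE : ∀ s, dE s = (1 - γ) * ∑' t : ℕ, γ ^ t * ((PE ^ t).mulVec d0 s)) :
    (1 / 2) * ∑ s, |dπ s - dE s|
      ≤ (γ / (1 - γ)) * ∑ s, dE s * ((1 / 2) * ∑ a, |π s a - πE s a|) :=
  state_dist_discrepancy_general M π πE d0 γ hγ0 hγ1 hM0 hM1 hπ0 hπ1 hπE0 hπE1 hd00 Pπ PE hPπ hPE dπ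
    dE hdπ hdE
end

section
/- (State-action distribution discrepancy bound) For two policies $\pi$ and $\pi_E$ on a finite MDP with discount $\gamma \in [0,1)$, the total variation distance between their discounted stationary state-action distributions satisfies $D_{TV}(\rho_\pi, \rho_{\pi_E}) \le \frac{1}{1-\gamma}\mathbb{E}_{s\sim d_{\pi_E}}[D_{TV}(\pi(\cdot|s), \pi_E(\cdot|s))]$. -/
open Matrix BigOperators

/-- Powers of a column-stochastic matrix applied to a distribution give a distribution. -/
lemma stoch_pow_dist {S : Type*} [Fintype S] [DecidableEq S]
    (P : Matrix S S ℝ) (d0 : S → ℝ)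
    (hP0 : ∀ s' s, 0 ≤ P s' s) (hP1 : ∀ s, ∑ s', P s' s = 1)
    (hd00 : ∀ s, 0 ≤ d0 s) (hd01 : ∑ s, d0 s = 1) (t : ℕ) :
    (∀ s, 0 ≤ (P ^ t).mulVec d0 s) ∧ ∑ s, (P ^ t).mulVec d0 s = 1 := by
  induction t with
  | zero =>
    simp [Matrix.one_mulVec]
    exact ⟨hd00, hd01⟩
  | succ t ih =>
    have hpow : (P ^ (t + 1)).mulVec d0 = P.mulVec ((P ^ t).mulVec d0) := by
      rw [Matrix.mulVec_mulVec, ← pow_succ']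
    constructor
    · intro s
      rw [hpow]
      unfold Matrix.mulVec dotProduct
      exact Finset.sum_nonneg fun s'' _ => mul_nonneg (hP0 s s'') (ih.1 s'')
    · rw [hpow]
      unfold Matrix.mulVec dotProduct
      rw [Finset.sum_comm]
      calc ∑ s'', ∑ s, P s s'' * (P ^ t).mulVec d0 s''
          = ∑ s'', (P ^ t).mulVec d0 s'' * ∑ s, P s s'' := by
            simp [Finset.mul_sum, mul_comm]
        _ = 1 := by
            simp only [hP1, mul_one]
            exact ih.2

/-- Fixed point equation for the discounted stationary distribution. -/
lemma disc_fixed {S : Type*} [Fintype S] [DecidableEq S]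
    (P : Matrix S S ℝ) (d0 : S → ℝ) (γ : ℝ) (hγ0 : 0 ≤ γ) (hγ1 : γ < 1)
    (hP0 : ∀ s' s, 0 ≤ P s' s) (hP1 : ∀ s, ∑ s', P s' s = 1)
    (hd00 : ∀ s, 0 ≤ d0 s) (hd01 : ∑ s, d0 s = 1)
    (d : S → ℝ)
    (hd : ∀ s, d s = (1 - γ) * ∑' t : ℕ, γ ^ t * ((P ^ t).mulVec d0 s)) :
    ∀ s, d s = (1 - γ) * d0 s + γ * (P.mulVec d s) := by
  have hv0 : ∀ t s, 0 ≤ (P ^ t).mulVec d0 s := fun t =>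
    (stoch_pow_dist P d0 hP0 hP1 hd00 hd01 t).1
  have hv1 : ∀ t s, (P ^ t).mulVec d0 s ≤ 1 := by
    intro t s
    have := (stoch_pow_dist P d0 hP0 hP1 hd00 hd01 t).2
    calc (P ^ t).mulVec d0 s ≤ ∑ s', (P ^ t).mulVec d0 s' :=
          Finset.single_le_sum (fun s' _ => hv0 t s') (Finset.mem_univ s)
      _ = 1 := this
  have hsum : ∀ s, Summable (fun t : ℕ => γ ^ t * ((P ^ t).mulVec d0 s)) := by
    intro s
    apply Summable.of_nonneg_of_le
      (fun t => mul_nonneg (pow_nonneg hγ0 t) (hv0 t s))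
      (fun t => by
        calc γ ^ t * (P ^ t).mulVec d0 s ≤ γ ^ t * 1 :=
              mul_le_mul_of_nonneg_left (hv1 t s) (pow_nonneg hγ0 t)
          _ = γ ^ t := mul_one _)
      (summable_geometric_of_lt_one hγ0 hγ1)
  set g : S → ℝ := fun s => ∑' t : ℕ, γ ^ t * ((P ^ t).mulVec d0 s) with hg
  have hfix : ∀ s, g s = d0 s + γ * ∑ s'', P s s'' * g s'' := by
    intro s
    have h0 : g s = γ ^ 0 * ((P ^ 0).mulVec d0 s)
        + ∑' t : ℕ, γ ^ (t + 1) * ((P ^ (t + 1)).mulVec d0 s) :=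
      Summable.tsum_eq_zero_add (hsum s)
    have hvsucc : ∀ t : ℕ, (P ^ (t + 1)).mulVec d0 s
        = ∑ s'', P s s'' * ((P ^ t).mulVec d0 s'') := by
      intro t
      have : (P ^ (t + 1)).mulVec d0 = P.mulVec ((P ^ t).mulVec d0) := by
        rw [Matrix.mulVec_mulVec, ← pow_succ']
      rw [this]
      rfl
    have hshift : (∑' t : ℕ, γ ^ (t + 1) * ((P ^ (t + 1)).mulVec d0 s))
        = γ * ∑ s'', P s s'' * g s'' := by
      have h1 : ∀ t : ℕ, γ ^ (t + 1) * ((P ^ (t + 1)).mulVec d0 s)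
          = ∑ s'', γ * (P s s'' * (γ ^ t * ((P ^ t).mulVec d0 s''))) := by
        intro t
        rw [hvsucc t, Finset.mul_sum]
        exact Finset.sum_congr rfl fun s'' _ => by ring
      rw [tsum_congr h1, Summable.tsum_finsetSum (fun s'' _ => by
        apply Summable.mul_left
        apply Summable.mul_left
        exact hsum s'')]
      rw [Finset.mul_sum]
      exact Finset.sum_congr rfl fun s'' _ => by
        rw [tsum_mul_left, tsum_mul_left]
    rw [h0, hshift]
    simp [Matrix.one_mulVec]
  intro s
  have hds : ∀ s', d s' = (1 - γ) * g s' := hd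
  have hmv : P.mulVec d s = ∑ s'', P s s'' * d s'' := rfl
  have key : ∑ s'', P s s'' * d s'' = (1 - γ) * ∑ s'', P s s'' * g s'' := by
    rw [Finset.mul_sum]
    exact Finset.sum_congr rfl fun s'' _ => by rw [hds s'']; ring
  rw [hds s, hfix s, hmv, key]
  ring

/-- State-action distribution discrepancy bound:
`D_TV(ρ_π, ρ_πE) ≤ 1/(1-γ) · E_{s ∼ d_πE}[D_TV(π(·|s), πE(·|s))]`. -/
theorem state_action_dist_discrepancy
    {S A : Type*} [Fintype S] [Fintype A] [DecidableEq S]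
    (M : S → A → S → ℝ) (π πE : S → A → ℝ) (d0 : S → ℝ) (γ : ℝ)
    (hγ0 : 0 ≤ γ) (hγ1 : γ < 1)
    (hM0 : ∀ s a s', 0 ≤ M s a s') (hM1 : ∀ s a, ∑ s', M s a s' = 1)
    (hπ0 : ∀ s a, 0 ≤ π s a) (hπ1 : ∀ s, ∑ a, π s a = 1)
    (hπE0 : ∀ s a, 0 ≤ πE s a) (hπE1 : ∀ s, ∑ a, πE s a = 1)
    (hd00 : ∀ s, 0 ≤ d0 s) (hd01 : ∑ s, d0 s = 1)
    (Pπ PE : Matrix S S ℝ)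
    (hPπ : ∀ s' s, Pπ s' s = ∑ a, π s a * M s a s')
    (hPE : ∀ s' s, PE s' s = ∑ a, πE s a * M s a s')
    (dπ dE : S → ℝ)
    (hdπ : ∀ s, dπ s = (1 - γ) * ∑' t : ℕ, γ ^ t * ((Pπ ^ t).mulVec d0 s))
    (hdE : ∀ s, dE s = (1 - γ) * ∑' t : ℕ, γ ^ t * ((PE ^ t).mulVec d0 s))
    (ρπ ρE : S → A → ℝ)
    (hρπ : ∀ s a, ρπ s a = π s a * dπ s)
    (hρE : ∀ s a, ρE s a = πE s a * dE s) :
    (1 / 2) * ∑ s, ∑ a, |ρπ s a - ρE s a|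
      ≤ (1 / (1 - γ)) * ∑ s, dE s * ((1 / 2) * ∑ a, |π s a - πE s a|) := by
  have h1γ : (0:ℝ) < 1 - γ := by linarith
  -- stochasticity of Pπ and PE
  have hPπ0 : ∀ s' s, 0 ≤ Pπ s' s := fun s' s => by
    rw [hPπ]; exact Finset.sum_nonneg fun a _ => mul_nonneg (hπ0 s a) (hM0 s a s')
  have hPπ1 : ∀ s, ∑ s', Pπ s' s = 1 := by
    intro s
    simp only [hPπ]
    rw [Finset.sum_comm]
    calc ∑ a, ∑ s', π s a * M s a s' = ∑ a, π s a * ∑ s', M s a s' := by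
          simp [Finset.mul_sum]
      _ = 1 := by simp only [hM1, mul_one]; exact hπ1 s
  have hPE0 : ∀ s' s, 0 ≤ PE s' s := fun s' s => by
    rw [hPE]; exact Finset.sum_nonneg fun a _ => mul_nonneg (hπE0 s a) (hM0 s a s')
  have hPE1 : ∀ s, ∑ s', PE s' s = 1 := by
    intro s
    simp only [hPE]
    rw [Finset.sum_comm]
    calc ∑ a, ∑ s', πE s a * M s a s' = ∑ a, πE s a * ∑ s', M s a s' := by
          simp [Finset.mul_sum]
      _ = 1 := by simp only [hM1, mul_one]; exact hπE1 s
  -- fixed point equations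
  have hfixπ := disc_fixed Pπ d0 γ hγ0 hγ1 hPπ0 hPπ1 hd00 hd01 dπ hdπ
  have hfixE := disc_fixed PE d0 γ hγ0 hγ1 hPE0 hPE1 hd00 hd01 dE hdE
  -- nonnegativity of dE
  have hdE0 : ∀ s, 0 ≤ dE s := by
    intro s
    rw [hdE s]
    apply mul_nonneg (le_of_lt h1γ)
    apply tsum_nonneg
    intro t
    exact mul_nonneg (pow_nonneg hγ0 t)
      ((stoch_pow_dist PE d0 hPE0 hPE1 hd00 hd01 t).1 s)
  -- key quantities
  set N : ℝ := ∑ s, |dπ s - dE s| with hN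
  set E : ℝ := ∑ s, dE s * ∑ a, |π s a - πE s a| with hE
  have hE0 : 0 ≤ E := Finset.sum_nonneg fun s _ =>
    mul_nonneg (hdE0 s) (Finset.sum_nonneg fun a _ => abs_nonneg _)
  -- column-wise bound on |Pπ - PE|
  have hcol : ∀ s'', ∑ s', |Pπ s' s'' - PE s' s''| ≤ ∑ a, |π s'' a - πE s'' a| := by
    intro s''
    calc ∑ s', |Pπ s' s'' - PE s' s''|
        = ∑ s', |∑ a, (π s'' a - πE s'' a) * M s'' a s'| := by
          apply Finset.sum_congr rfl
          intro s' _
          rw [hPπ, hPE, ← Finset.sum_sub_distrib]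
          exact congrArg _ (Finset.sum_congr rfl fun a _ => by ring)
      _ ≤ ∑ s', ∑ a, |π s'' a - πE s'' a| * M s'' a s' := by
          apply Finset.sum_le_sum
          intro s' _
          calc |∑ a, (π s'' a - πE s'' a) * M s'' a s'|
              ≤ ∑ a, |(π s'' a - πE s'' a) * M s'' a s'| := Finset.abs_sum_le_sum_abs _ _
            _ = ∑ a, |π s'' a - πE s'' a| * M s'' a s' := by
                apply Finset.sum_congr rfl
                intro a _
                rw [abs_mul, abs_of_nonneg (hM0 s'' a s')]
      _ = ∑ a, |π s'' a - πE s'' a| * ∑ s', M s'' a s' := by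
          rw [Finset.sum_comm]; simp [Finset.mul_sum]
      _ = ∑ a, |π s'' a - πE s'' a| := by simp only [hM1, mul_one]
  -- main recursive bound: N ≤ γ N + γ E
  have hNbound : N ≤ γ * N + γ * E := by
    have hΔ : ∀ s, dπ s - dE s
        = γ * ∑ s'', (Pπ s s'' * (dπ s'' - dE s'') + (Pπ s s'' - PE s s'') * dE s'') := by
      intro s
      have hπv : Pπ.mulVec dπ s = ∑ s'', Pπ s s'' * dπ s'' := rfl
      have hEv : PE.mulVec dE s = ∑ s'', PE s s'' * dE s'' := rfl
      have expand : γ * ∑ s'', (Pπ s s'' * (dπ s'' - dE s'') + (Pπ s s'' - PE s s'') * dE s'')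
          = γ * ∑ s'', Pπ s s'' * dπ s''
            - γ * ∑ s'', PE s s'' * dE s'' := by
        rw [Finset.mul_sum, Finset.mul_sum, Finset.mul_sum, ← Finset.sum_sub_distrib]
        exact Finset.sum_congr rfl fun s'' _ => by ring
      rw [hfixπ s, hfixE s, hπv, hEv, expand]
      ring
    calc N = ∑ s, |γ * ∑ s'', (Pπ s s'' * (dπ s'' - dE s'')
            + (Pπ s s'' - PE s s'') * dE s'')| := by
          rw [hN]
          exact Finset.sum_congr rfl fun s _ => by rw [hΔ s]
      _ ≤ ∑ s, γ * ∑ s'', (Pπ s s'' * |dπ s'' - dE s''|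
            + |Pπ s s'' - PE s s''| * dE s'') := by
          apply Finset.sum_le_sum
          intro s _
          rw [abs_mul, abs_of_nonneg hγ0]
          apply mul_le_mul_of_nonneg_left _ hγ0
          calc |∑ s'', (Pπ s s'' * (dπ s'' - dE s'') + (Pπ s s'' - PE s s'') * dE s'')|
              ≤ ∑ s'', |Pπ s s'' * (dπ s'' - dE s'') + (Pπ s s'' - PE s s'') * dE s''| :=
                Finset.abs_sum_le_sum_abs _ _
            _ ≤ ∑ s'', (Pπ s s'' * |dπ s'' - dE s''| + |Pπ s s'' - PE s s''| * dE s'') := by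
                apply Finset.sum_le_sum
                intro s'' _
                calc |Pπ s s'' * (dπ s'' - dE s'') + (Pπ s s'' - PE s s'') * dE s''|
                    ≤ |Pπ s s'' * (dπ s'' - dE s'')| + |(Pπ s s'' - PE s s'') * dE s''| :=
                      abs_add_le _ _
                  _ = Pπ s s'' * |dπ s'' - dE s''| + |Pπ s s'' - PE s s''| * dE s'' := by
                      rw [abs_mul, abs_mul, abs_of_nonneg (hPπ0 s s''),
                        abs_of_nonneg (hdE0 s'')]
      _ = γ * (∑ s, ∑ s'', Pπ s s'' * |dπ s'' - dE s''|)
            + γ * (∑ s, ∑ s'', |Pπ s s'' - PE s s''| * dE s'') := by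
          rw [← Finset.mul_sum, ← mul_add, ← Finset.sum_add_distrib]
          congr 1
          exact Finset.sum_congr rfl fun s _ => Finset.sum_add_distrib
      _ ≤ γ * N + γ * E := by
          have h1 : (∑ s, ∑ s'', Pπ s s'' * |dπ s'' - dE s''|) = N := by
            rw [Finset.sum_comm, hN]
            apply Finset.sum_congr rfl
            intro s'' _
            rw [← Finset.sum_mul, hPπ1 s'', one_mul]
          have h2 : (∑ s, ∑ s'', |Pπ s s'' - PE s s''| * dE s'') ≤ E := by
            rw [Finset.sum_comm, hE]
            apply Finset.sum_le_sum
            intro s'' _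
            rw [← Finset.sum_mul, mul_comm (dE s'')]
            exact mul_le_mul_of_nonneg_right (hcol s'') (hdE0 s'')
          have := mul_le_mul_of_nonneg_left h2 hγ0
          rw [h1]
          linarith
  -- bound on the double sum
  have hmain : ∑ s, ∑ a, |ρπ s a - ρE s a| ≤ N + E := by
    calc ∑ s, ∑ a, |ρπ s a - ρE s a|
        ≤ ∑ s, (|dπ s - dE s| + dE s * ∑ a, |π s a - πE s a|) := by
          apply Finset.sum_le_sum
          intro s _
          calc ∑ a, |ρπ s a - ρE s a|
              ≤ ∑ a, (π s a * |dπ s - dE s| + |π s a - πE s a| * dE s) := by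
                apply Finset.sum_le_sum
                intro a _
                rw [hρπ, hρE]
                have : π s a * dπ s - πE s a * dE s
                    = π s a * (dπ s - dE s) + (π s a - πE s a) * dE s := by ring
                rw [this]
                calc |π s a * (dπ s - dE s) + (π s a - πE s a) * dE s|
                    ≤ |π s a * (dπ s - dE s)| + |(π s a - πE s a) * dE s| := abs_add_le _ _
                  _ = π s a * |dπ s - dE s| + |π s a - πE s a| * dE s := by
                      rw [abs_mul, abs_mul, abs_of_nonneg (hπ0 s a),
                        abs_of_nonneg (hdE0 s)]
            _ = |dπ s - dE s| + dE s * ∑ a, |π s a - πE s a| := by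
                rw [Finset.sum_add_distrib, ← Finset.sum_mul, hπ1 s, one_mul,
                  ← Finset.sum_mul, mul_comm]
      _ = N + E := by rw [Finset.sum_add_distrib]
  -- finish
  have hRHS : (1 / (1 - γ)) * ∑ s, dE s * ((1 / 2) * ∑ a, |π s a - πE s a|)
      = (1 / (1 - γ)) * ((1 / 2) * E) := by
    congr 1
    rw [hE, Finset.mul_sum]
    apply Finset.sum_congr rfl
    intro s _
    ring
  rw [hRHS]
  rw [div_mul_eq_mul_div, div_mul_eq_mul_div, le_div_iff₀ h1γ]
  have hN0 : 0 ≤ N := Finset.sum_nonneg fun s _ => abs_nonneg _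
  nlinarith [hmain, hNbound]
end

section
/- (GAIL value gap with JS divergence) If an expert policy $\pi_E$ and an imitated policy $\pi_I$ on a finite MDP with reward bounded by $R_{\max}$ satisfy $D_{JS}(\rho_{\pi_I}, \rho_{\pi_E}) \le \epsilon$, then $V_{\pi_E} - V_{\pi_I} \le \frac{2\sqrt{2} R_{\max}}{1-\gamma}\sqrt{\epsilon}$. -/
/-!
Write `m = (p + q) / 2`, `p = m (1 + t)`, `q = m (1 - t)` with `|t| ≤ 1`. The two
Jensen–Shannon summands at a point add up to `m ((1 + t) log (1 + t) + (1 - t) log (1 - t))`,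
which is at least `m t² = (p - q)² / (2 (p + q))`: the difference vanishes at `t = 0` and has
derivative `log (1 + t) - log (1 - t) - 2 t`, nonnegative for `t ≥ 0` by the `artanh` series.
Cauchy–Schwarz with the weights `p + q`, whose total mass is `2`, then gives
`(∑ |p - q|)² ≤ 8 D_JS(p, q)`. The value gap is `(1 - γ)⁻¹ ∑ (ρ_E - ρ_I) r`, at most
`R_max / (1 - γ) · ∑ |ρ_E - ρ_I|`.
-/

open Real Finset

section
variable {ι : Type*}

lemma two_mul_le_log_one_add_sub_log_one_sub {t : ℝ} (h0 : 0 ≤ t) (h1 : t < 1) :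
    2 * t ≤ log (1 + t) - log (1 - t) := by
  have hs := hasSum_log_sub_log_of_abs_lt_one (abs_lt.2 ⟨by linarith, h1⟩)
  simpa using le_hasSum hs 0 fun k _ => by positivity

lemma sq_le_mul_log_one_add_add_mul_log_one_sub_of_nonneg {t : ℝ} (h0 : 0 ≤ t) (h1 : t ≤ 1) :
    t ^ 2 ≤ (1 + t) * log (1 + t) + (1 - t) * log (1 - t) := by
  set g : ℝ → ℝ := fun x => (1 + x) * log (1 + x) + (1 - x) * log (1 - x) - x ^ 2
  have hderiv : ∀ x ∈ Set.Ioo (0 : ℝ) 1,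
      HasDerivAt g (log (1 + x) - log (1 - x) - 2 * x) x := by
    intro x hx
    have hp := ((hasDerivAt_mul_log (by linarith [hx.1] : 1 + x ≠ 0)).comp x
      ((hasDerivAt_id x).const_add 1))
    have hm := ((hasDerivAt_mul_log (by linarith [hx.2] : 1 - x ≠ 0)).comp x
      ((hasDerivAt_id x).const_sub 1))
    refine ((hp.add hm).sub (hasDerivAt_pow 2 x)).congr_deriv ?_
    push_cast
    ring
  have hmono : MonotoneOn g (Set.Icc 0 1) := by
    refine monotoneOn_of_deriv_nonneg (convex_Icc 0 1) ?_ ?_ ?_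
    · have := continuous_mul_log
      fun_prop
    · rw [interior_Icc]
      exact fun x hx => (hderiv x hx).differentiableAt.differentiableWithinAt
    · intro x hx
      rw [interior_Icc] at hx
      rw [(hderiv x hx).deriv, sub_nonneg]
      exact two_mul_le_log_one_add_sub_log_one_sub hx.1.le hx.2
  simpa [g] using hmono ⟨le_rfl, zero_le_one⟩ ⟨h0, h1⟩ h0

lemma sq_le_mul_log_one_add_add_mul_log_one_sub {t : ℝ} (ht : |t| ≤ 1) :
    t ^ 2 ≤ (1 + t) * log (1 + t) + (1 - t) * log (1 - t) := by
  rcases le_total 0 t with h | h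
  · exact sq_le_mul_log_one_add_add_mul_log_one_sub_of_nonneg h (abs_le.1 ht).2
  · have := sq_le_mul_log_one_add_add_mul_log_one_sub_of_nonneg (neg_nonneg.2 h)
      (by linarith [(abs_le.1 ht).1])
    rw [neg_sq, ← sub_eq_add_neg, sub_neg_eq_add] at this
    linarith

lemma sq_sub_div_le_mul_log_add_mul_log {p q : ℝ} (hp : 0 ≤ p) (hq : 0 ≤ q) :
    (p - q) ^ 2 / (2 * (p + q)) ≤
      p * log (p / ((p + q) / 2)) + q * log (q / ((p + q) / 2)) := by
  set m := (p + q) / 2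
  rcases (by positivity : 0 ≤ p + q).eq_or_lt with hpq | hpq
  · obtain ⟨rfl, rfl⟩ : p = 0 ∧ q = 0 := ⟨by linarith, by linarith⟩
    simp
  set t := (p - q) / (p + q)
  have hm : 0 < m := by positivity
  have hpt : p / m = 1 + t := by simp only [m, t]; field_simp; ring
  have hqt : q / m = 1 - t := by simp only [m, t]; field_simp; ring
  have ht : |t| ≤ 1 := by
    rw [abs_div, abs_of_pos hpq, div_le_one hpq, abs_le]
    constructor <;> linarith
  calc (p - q) ^ 2 / (2 * (p + q)) = m * t ^ 2 := by simp only [m, t]; field_simp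
    _ ≤ m * ((1 + t) * log (1 + t) + (1 - t) * log (1 - t)) := by
      gcongr
      exact sq_le_mul_log_one_add_add_mul_log_one_sub ht
    _ = p * log (p / m) + q * log (q / m) := by
      rw [← hpt, ← hqt, mul_add, ← mul_assoc, ← mul_assoc, mul_div_cancel₀ _ hm.ne',
        mul_div_cancel₀ _ hm.ne']

lemma sq_sum_abs_sub_le_sum_add_mul_sum_sq_sub_div (s : Finset ι) {p q : ι → ℝ}
    (hp : ∀ i ∈ s, 0 ≤ p i) (hq : ∀ i ∈ s, 0 ≤ q i) :
    (∑ i ∈ s, |p i - q i|) ^ 2 ≤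
      (∑ i ∈ s, (p i + q i)) * ∑ i ∈ s, (p i - q i) ^ 2 / (p i + q i) := by
  refine sum_sq_le_sum_mul_sum_of_sq_le_mul s (fun i hi => add_nonneg (hp i hi) (hq i hi))
    (fun i hi => div_nonneg (sq_nonneg _) (add_nonneg (hp i hi) (hq i hi))) fun i hi => ?_
  rcases (add_nonneg (hp i hi) (hq i hi)).eq_or_lt with hpq | hpq
  · have := hp i hi
    have := hq i hi
    obtain ⟨hp0, hq0⟩ : p i = 0 ∧ q i = 0 := ⟨by linarith, by linarith⟩
    simp [hp0, hq0]
  · rw [sq_abs, mul_div_cancel₀ _ hpq.ne']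

noncomputable def jsDivergence [Fintype ι] (p q : ι → ℝ) : ℝ :=
  (1 / 2) * (∑ i, p i * log (p i / ((p i + q i) / 2)) +
    ∑ i, q i * log (q i / ((p i + q i) / 2)))

lemma sq_sum_abs_sub_le_eight_mul_jsDivergence [Fintype ι] {p q : ι → ℝ}
    (hp0 : ∀ i, 0 ≤ p i) (hp1 : ∑ i, p i = 1) (hq0 : ∀ i, 0 ≤ q i)
    (hq1 : ∑ i, q i = 1) :
    (∑ i, |p i - q i|) ^ 2 ≤ 8 * jsDivergence p q := by
  calc (∑ i, |p i - q i|) ^ 2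
      ≤ (∑ i, (p i + q i)) * ∑ i, (p i - q i) ^ 2 / (p i + q i) :=
        sq_sum_abs_sub_le_sum_add_mul_sum_sq_sub_div _ (fun i _ => hp0 i) fun i _ => hq0 i
    _ = 4 * ∑ i, (p i - q i) ^ 2 / (2 * (p i + q i)) := by
        rw [sum_add_distrib, hp1, hq1, mul_sum, mul_sum]
        refine sum_congr rfl fun i _ => ?_
        rw [div_mul_eq_div_div_swap]
        ring
    _ ≤ 4 * ∑ i, (p i * log (p i / ((p i + q i) / 2)) +
          q i * log (q i / ((p i + q i) / 2))) := by
        gcongr with i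
        exact sq_sub_div_le_mul_log_add_mul_log (hp0 i) (hq0 i)
    _ = 8 * jsDivergence p q := by
        rw [jsDivergence, sum_add_distrib]
        ring

lemma sum_abs_sub_le_two_mul_sqrt_two_mul_sqrt_jsDivergence [Fintype ι]
    {p q : ι → ℝ} (hp0 : ∀ i, 0 ≤ p i) (hp1 : ∑ i, p i = 1) (hq0 : ∀ i, 0 ≤ q i)
    (hq1 : ∑ i, q i = 1) :
    ∑ i, |p i - q i| ≤ 2 * √2 * √(jsDivergence p q) := by
  have hsqrt8 : √8 = 2 * √2 := by
    rw [show (8 : ℝ) = 2 ^ 2 * 2 by norm_num, sqrt_mul (by positivity), sqrt_sq zero_le_two]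
  calc ∑ i, |p i - q i| ≤ √(8 * jsDivergence p q) := (le_abs_self _).trans
        (abs_le_sqrt (sq_sum_abs_sub_le_eight_mul_jsDivergence hp0 hp1 hq0 hq1))
    _ = 2 * √2 * √(jsDivergence p q) := by rw [sqrt_mul (by norm_num), hsqrt8]

lemma abs_sum_mul_sub_sum_mul_le (s : Finset ι) {p q r : ι → ℝ} {R : ℝ}
    (hr : ∀ i ∈ s, |r i| ≤ R) :
    |∑ i ∈ s, p i * r i - ∑ i ∈ s, q i * r i| ≤ R * ∑ i ∈ s, |p i - q i| := by
  rw [← sum_sub_distrib, mul_sum]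
  refine (abs_sum_le_sum_abs _ _).trans (sum_le_sum fun i hi => ?_)
  rw [← sub_mul, abs_mul, mul_comm]
  exact mul_le_mul_of_nonneg_right (hr i hi) (abs_nonneg _)

end

theorem gail_value_gap_js_general
    {S A : Type*} [Fintype S] [Fintype A]
    (γ Rmax ε : ℝ) (hγ1 : γ < 1)
    (r : S → A → ℝ) (hr : ∀ s a, |r s a| ≤ Rmax)
    (ρI ρE : S → A → ℝ)
    (hρI0 : ∀ s a, 0 ≤ ρI s a) (hρI1 : ∑ s, ∑ a, ρI s a = 1)
    (hρE0 : ∀ s a, 0 ≤ ρE s a) (hρE1 : ∑ s, ∑ a, ρE s a = 1)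
    (VI VE : ℝ)
    (hVI : VI = (1 / (1 - γ)) * ∑ s, ∑ a, ρI s a * r s a)
    (hVE : VE = (1 / (1 - γ)) * ∑ s, ∑ a, ρE s a * r s a)
    (hJS : (1 / 2) * ((∑ s, ∑ a, ρI s a * Real.log (ρI s a / ((ρI s a + ρE s a) / 2)))
        + ∑ s, ∑ a, ρE s a * Real.log (ρE s a / ((ρI s a + ρE s a) / 2))) ≤ ε) :
    VE - VI ≤ (2 * Real.sqrt 2 * Rmax / (1 - γ)) * Real.sqrt ε := by
  set P : S × A → ℝ := fun x => ρI x.1 x.2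
  set Q : S × A → ℝ := fun x => ρE x.1 x.2
  have hP1 : ∑ x, P x = 1 := by rwa [Fintype.sum_prod_type]
  have hQ1 : ∑ x, Q x = 1 := by rwa [Fintype.sum_prod_type]
  have hJS' : jsDivergence P Q ≤ ε := by
    simpa only [jsDivergence, Fintype.sum_prod_type] using hJS
  have hL1 : ∑ x, |P x - Q x| ≤ 2 * √2 * √ε :=
    (sum_abs_sub_le_two_mul_sqrt_two_mul_sqrt_jsDivergence (fun x : S × A => hρI0 x.1 x.2)
      hP1 (fun x : S × A => hρE0 x.1 x.2) hQ1).trans (by gcongr)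
  obtain ⟨x₀, -, -⟩ := exists_ne_zero_of_sum_ne_zero (hP1 ▸ one_ne_zero : ∑ x, P x ≠ 0)
  have hR : 0 ≤ Rmax := (abs_nonneg _).trans (hr x₀.1 x₀.2)
  have hgap :
      VE - VI = (∑ x : S × A, Q x * r x.1 x.2 - ∑ x : S × A, P x * r x.1 x.2) / (1 - γ) := by
    rw [hVE, hVI, Fintype.sum_prod_type, Fintype.sum_prod_type]
    ring
  rw [hgap, mul_comm, ← mul_div_assoc]
  refine div_le_div_of_nonneg_right ?_ (by linarith)
  calc ∑ x : S × A, Q x * r x.1 x.2 - ∑ x : S × A, P x * r x.1 x.2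
      ≤ |∑ x, P x * r x.1 x.2 - ∑ x, Q x * r x.1 x.2| :=
        (le_abs_self _).trans_eq (abs_sub_comm _ _)
    _ ≤ Rmax * ∑ x, |P x - Q x| := abs_sum_mul_sub_sum_mul_le _ fun x _ => hr x.1 x.2
    _ ≤ Rmax * (2 * √2 * √ε) := by gcongr
    _ = √ε * (2 * √2 * Rmax) := by ring

/-- GAIL value gap with JS divergence: if `D_JS(ρ_πI, ρ_πE) ≤ ε` then
`V_πE - V_πI ≤ 2√2 R_max/(1-γ) √ε`. -/
theorem gail_value_gap_js
    {S A : Type*} [Fintype S] [Fintype A]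
    (γ Rmax ε : ℝ) (hγ0 : 0 ≤ γ) (hγ1 : γ < 1) (hε : 0 ≤ ε)
    (r : S → A → ℝ) (hr : ∀ s a, |r s a| ≤ Rmax)
    (ρI ρE : S → A → ℝ)
    (hρI0 : ∀ s a, 0 ≤ ρI s a) (hρI1 : ∑ s, ∑ a, ρI s a = 1)
    (hρE0 : ∀ s a, 0 ≤ ρE s a) (hρE1 : ∑ s, ∑ a, ρE s a = 1)
    (VI VE : ℝ)
    (hVI : VI = (1 / (1 - γ)) * ∑ s, ∑ a, ρI s a * r s a)
    (hVE : VE = (1 / (1 - γ)) * ∑ s, ∑ a, ρE s a * r s a)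
    (hJS : (1 / 2) * ((∑ s, ∑ a, ρI s a * Real.log (ρI s a / ((ρI s a + ρE s a) / 2)))
        + ∑ s, ∑ a, ρE s a * Real.log (ρE s a / ((ρI s a + ρE s a) / 2))) ≤ ε) :
    VE - VI ≤ (2 * Real.sqrt 2 * Rmax / (1 - γ)) * Real.sqrt ε :=
  gail_value_gap_js_general γ Rmax ε hγ1 r hr ρI ρE hρI0 hρI1 hρE0 hρE1 VI VE hVI hVE hJS
end

section
/- (GAIL value gap with squared Hellinger distance) If the squared Hellinger distance satisfies $D_H(\rho_{\pi_I}, \rho_{\pi_E}) = \sum_{s,a}(\sqrt{\rho_{\pi_I}(s,a)} - \sqrt{\rho_{\pi_E}(s,a)})^2 \le \epsilon$, and the reward is bounded by $R_{\max}$, then $V_{\pi_E} - V_{\pi_I} \le \frac{2 R_{\max}}{1-\gamma}\sqrt{\epsilon}$. -/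
open BigOperators

/-- GAIL value gap with squared Hellinger distance: if
`∑ (√ρ_πI - √ρ_πE)² ≤ ε` then `V_πE - V_πI ≤ 2 R_max/(1-γ) √ε`. -/
theorem gail_value_gap_hellinger
    {S A : Type*} [Fintype S] [Fintype A]
    (γ Rmax ε : ℝ) (hγ0 : 0 ≤ γ) (hγ1 : γ < 1) (hε : 0 ≤ ε)
    (r : S → A → ℝ) (hr : ∀ s a, |r s a| ≤ Rmax)
    (ρI ρE : S → A → ℝ)
    (hρI0 : ∀ s a, 0 ≤ ρI s a) (hρI1 : ∑ s, ∑ a, ρI s a = 1)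
    (hρE0 : ∀ s a, 0 ≤ ρE s a) (hρE1 : ∑ s, ∑ a, ρE s a = 1)
    (VI VE : ℝ)
    (hVI : VI = (1 / (1 - γ)) * ∑ s, ∑ a, ρI s a * r s a)
    (hVE : VE = (1 / (1 - γ)) * ∑ s, ∑ a, ρE s a * r s a)
    (hH : ∑ s, ∑ a, (Real.sqrt (ρI s a) - Real.sqrt (ρE s a)) ^ 2 ≤ ε) :
    VE - VI ≤ (2 * Rmax / (1 - γ)) * Real.sqrt ε := by
  have hγ : (0:ℝ) < 1 - γ := by linarith
  -- flatten sums to product type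
  have hI1 : ∑ p : S × A, ρI p.1 p.2 = 1 := by rw [Fintype.sum_prod_type]; exact hρI1
  have hE1 : ∑ p : S × A, ρE p.1 p.2 = 1 := by rw [Fintype.sum_prod_type]; exact hρE1
  have hH' : ∑ p : S × A, (Real.sqrt (ρI p.1 p.2) - Real.sqrt (ρE p.1 p.2)) ^ 2 ≤ ε := by
    rw [Fintype.sum_prod_type]; exact hH
  have hne : (Finset.univ : Finset (S × A)).Nonempty := by
    rcases Finset.univ.eq_empty_or_nonempty (α := S × A) with h | h
    · exfalso; rw [h] at hI1; simp at hI1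
    · exact h
  obtain ⟨p0, _⟩ := hne
  have hR0 : 0 ≤ Rmax := le_trans (abs_nonneg _) (hr p0.1 p0.2)
  -- Cauchy–Schwarz: ∑ √ρI √ρE ≤ 1
  have hCS1 : (∑ p : S × A, Real.sqrt (ρI p.1 p.2) * Real.sqrt (ρE p.1 p.2)) ^ 2 ≤ 1 := by
    calc (∑ p : S × A, Real.sqrt (ρI p.1 p.2) * Real.sqrt (ρE p.1 p.2)) ^ 2
        ≤ (∑ p : S × A, Real.sqrt (ρI p.1 p.2) ^ 2) *
          (∑ p : S × A, Real.sqrt (ρE p.1 p.2) ^ 2) :=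
          Finset.sum_mul_sq_le_sq_mul_sq _ _ _
      _ = 1 := by
          simp only [Real.sq_sqrt (hρI0 _ _), Real.sq_sqrt (hρE0 _ _)]
          rw [hI1, hE1]; ring
  have hmix : ∑ p : S × A, Real.sqrt (ρI p.1 p.2) * Real.sqrt (ρE p.1 p.2) ≤ 1 := by
    have hnn : 0 ≤ ∑ p : S × A, Real.sqrt (ρI p.1 p.2) * Real.sqrt (ρE p.1 p.2) :=
      Finset.sum_nonneg fun p _ =>
        mul_nonneg (Real.sqrt_nonneg (ρI p.1 p.2)) (Real.sqrt_nonneg (ρE p.1 p.2))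
    nlinarith
  -- bound on ∑ (√I + √E)^2 ≤ 4
  have hsum4 : ∑ p : S × A, (Real.sqrt (ρI p.1 p.2) + Real.sqrt (ρE p.1 p.2)) ^ 2 ≤ 4 := by
    have : ∑ p : S × A, (Real.sqrt (ρI p.1 p.2) + Real.sqrt (ρE p.1 p.2)) ^ 2
        = (∑ p : S × A, ρI p.1 p.2) + (∑ p : S × A, ρE p.1 p.2)
          + 2 * ∑ p : S × A, Real.sqrt (ρI p.1 p.2) * Real.sqrt (ρE p.1 p.2) := by
      rw [← Finset.sum_add_distrib, Finset.mul_sum, ← Finset.sum_add_distrib]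
      apply Finset.sum_congr rfl
      intro p _
      have h1 := Real.sq_sqrt (hρI0 p.1 p.2)
      have h2 := Real.sq_sqrt (hρE0 p.1 p.2)
      nlinarith
    rw [this, hI1, hE1]; linarith
  -- TV bound
  have hTV : ∑ p : S × A, |ρE p.1 p.2 - ρI p.1 p.2| ≤ 2 * Real.sqrt ε := by
    have hid : ∀ p : S × A, |ρE p.1 p.2 - ρI p.1 p.2|
        = |Real.sqrt (ρI p.1 p.2) - Real.sqrt (ρE p.1 p.2)| *
          (Real.sqrt (ρI p.1 p.2) + Real.sqrt (ρE p.1 p.2)) := by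
      intro p
      have h1 := Real.sq_sqrt (hρI0 p.1 p.2)
      have h2 := Real.sq_sqrt (hρE0 p.1 p.2)
      rw [abs_sub_comm, ← abs_of_nonneg (add_nonneg (Real.sqrt_nonneg (ρI p.1 p.2)) (Real.sqrt_nonneg _)), ← abs_mul]
      congr 1
      nlinarith
    have hCS2 : (∑ p : S × A, |ρE p.1 p.2 - ρI p.1 p.2|) ^ 2
        ≤ (∑ p : S × A, |Real.sqrt (ρI p.1 p.2) - Real.sqrt (ρE p.1 p.2)| ^ 2) *
          (∑ p : S × A, (Real.sqrt (ρI p.1 p.2) + Real.sqrt (ρE p.1 p.2)) ^ 2) := by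
      simp only [hid]
      exact Finset.sum_mul_sq_le_sq_mul_sq _ _ _
    have habs : ∑ p : S × A, |Real.sqrt (ρI p.1 p.2) - Real.sqrt (ρE p.1 p.2)| ^ 2 ≤ ε := by
      simpa [sq_abs] using hH'
    have hsq : (∑ p : S × A, |ρE p.1 p.2 - ρI p.1 p.2|) ^ 2 ≤ ε * 4 := by
      calc (∑ p : S × A, |ρE p.1 p.2 - ρI p.1 p.2|) ^ 2
          ≤ (∑ p : S × A, |Real.sqrt (ρI p.1 p.2) - Real.sqrt (ρE p.1 p.2)| ^ 2) *
            (∑ p : S × A, (Real.sqrt (ρI p.1 p.2) + Real.sqrt (ρE p.1 p.2)) ^ 2) := hCS2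
        _ ≤ ε * 4 := by
            apply mul_le_mul habs hsum4 ?_ hε
            exact Finset.sum_nonneg fun p _ => sq_nonneg _
    have hnn : 0 ≤ ∑ p : S × A, |ρE p.1 p.2 - ρI p.1 p.2| :=
      Finset.sum_nonneg fun p _ => abs_nonneg _
    have h2e : (2 * Real.sqrt ε) ^ 2 = ε * 4 := by
      rw [mul_pow, Real.sq_sqrt hε]; ring
    nlinarith [Real.sqrt_nonneg ε]
  -- value gap
  have hgap : VE - VI = (1 / (1 - γ)) * ∑ p : S × A, (ρE p.1 p.2 - ρI p.1 p.2) * r p.1 p.2 := by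
    rw [hVE, hVI, ← mul_sub]
    congr 1
    rw [Fintype.sum_prod_type, ← Finset.sum_sub_distrib]
    apply Finset.sum_congr rfl
    intro s _
    rw [← Finset.sum_sub_distrib]
    apply Finset.sum_congr rfl
    intro a _
    ring
  have hterm : ∑ p : S × A, (ρE p.1 p.2 - ρI p.1 p.2) * r p.1 p.2
      ≤ Rmax * ∑ p : S × A, |ρE p.1 p.2 - ρI p.1 p.2| := by
    rw [Finset.mul_sum]
    apply Finset.sum_le_sum
    intro p _
    calc (ρE p.1 p.2 - ρI p.1 p.2) * r p.1 p.2
        ≤ |(ρE p.1 p.2 - ρI p.1 p.2) * r p.1 p.2| := le_abs_self _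
      _ = |ρE p.1 p.2 - ρI p.1 p.2| * |r p.1 p.2| := abs_mul _ _
      _ ≤ |ρE p.1 p.2 - ρI p.1 p.2| * Rmax := by
          exact mul_le_mul_of_nonneg_left (hr p.1 p.2) (abs_nonneg _)
      _ = Rmax * |ρE p.1 p.2 - ρI p.1 p.2| := mul_comm _ _
  calc VE - VI = (1 / (1 - γ)) * ∑ p : S × A, (ρE p.1 p.2 - ρI p.1 p.2) * r p.1 p.2 := hgap
    _ ≤ (1 / (1 - γ)) * (Rmax * ∑ p : S × A, |ρE p.1 p.2 - ρI p.1 p.2|) := by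
        apply mul_le_mul_of_nonneg_left hterm
        positivity
    _ ≤ (1 / (1 - γ)) * (Rmax * (2 * Real.sqrt ε)) := by
        apply mul_le_mul_of_nonneg_left _ (by positivity)
        exact mul_le_mul_of_nonneg_left hTV hR0
    _ = (2 * Rmax / (1 - γ)) * Real.sqrt ε := by field_simp
end

section
/- (GAIL value gap with chi-squared divergence) If the Pearson chi-squared divergence satisfies $\chi^2(\rho_{\pi_I},\rho_{\pi_E}) = \sum_{s,a}\frac{(\rho_{\pi_I}(s,a)-\rho_{\pi_E}(s,a))^2}{\rho_{\pi_I}(s,a)} \le \epsilon$, and the reward is bounded by $R_{\max}$, then $V_{\pi_E} - V_{\pi_I} \le \frac{R_{\max}}{1-\gamma}\sqrt{\epsilon}$. -/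
open BigOperators

/-- GAIL value gap with Pearson chi-squared divergence: if
`χ²(ρ_πI, ρ_πE) ≤ ε` then `V_πE - V_πI ≤ R_max/(1-γ) √ε`. -/
theorem gail_value_gap_chisq
    {S A : Type*} [Fintype S] [Fintype A]
    (γ Rmax ε : ℝ) (hγ0 : 0 ≤ γ) (hγ1 : γ < 1) (hε : 0 ≤ ε)
    (r : S → A → ℝ) (hr : ∀ s a, |r s a| ≤ Rmax)
    (ρI ρE : S → A → ℝ)
    (hρI0 : ∀ s a, 0 < ρI s a) (hρI1 : ∑ s, ∑ a, ρI s a = 1)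
    (hρE0 : ∀ s a, 0 ≤ ρE s a) (hρE1 : ∑ s, ∑ a, ρE s a = 1)
    (VI VE : ℝ)
    (hVI : VI = (1 / (1 - γ)) * ∑ s, ∑ a, ρI s a * r s a)
    (hVE : VE = (1 / (1 - γ)) * ∑ s, ∑ a, ρE s a * r s a)
    (hChi : ∑ s, ∑ a, (ρI s a - ρE s a) ^ 2 / ρI s a ≤ ε) :
    VE - VI ≤ (Rmax / (1 - γ)) * Real.sqrt ε := by
  have hγ : 0 < 1 - γ := by linarith
  -- work on the product type
  set T := S × A
  set δ : T → ℝ := fun p => ρE p.1 p.2 - ρI p.1 p.2 with hδ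
  have hsum1 : ∑ p : T, ρI p.1 p.2 = 1 := by
    rw [Fintype.sum_prod_type]; exact hρI1
  have hchi' : ∑ p : T, δ p ^ 2 / ρI p.1 p.2 ≤ ε := by
    have : ∑ p : T, δ p ^ 2 / ρI p.1 p.2
        = ∑ s, ∑ a, (ρI s a - ρE s a) ^ 2 / ρI s a := by
      rw [Fintype.sum_prod_type]
      congr 1; ext s; congr 1; ext a
      rw [hδ]; ring_nf
    linarith [hChi]
  -- Cauchy-Schwarz: (∑ |δ|)² ≤ (∑ δ²/ρI) * (∑ ρI) ≤ ε
  have hCS : (∑ p : T, |δ p|) ^ 2 ≤ ε := by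
    have key := Finset.sum_mul_sq_le_sq_mul_sq Finset.univ
      (fun p : T => |δ p| / Real.sqrt (ρI p.1 p.2))
      (fun p : T => Real.sqrt (ρI p.1 p.2))
    have e1 : ∀ p : T, |δ p| / Real.sqrt (ρI p.1 p.2) * Real.sqrt (ρI p.1 p.2) = |δ p| := by
      intro p
      rw [div_mul_cancel₀]
      exact Real.sqrt_ne_zero'.mpr (hρI0 p.1 p.2)
    have e2 : ∀ p : T, (|δ p| / Real.sqrt (ρI p.1 p.2)) ^ 2 = δ p ^ 2 / ρI p.1 p.2 := by
      intro p
      rw [div_pow, sq_abs, Real.sq_sqrt (hρI0 p.1 p.2).le]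
    have e3 : ∀ p : T, Real.sqrt (ρI p.1 p.2) ^ 2 = ρI p.1 p.2 := fun p =>
      Real.sq_sqrt (hρI0 p.1 p.2).le
    simp only [e1, e2, e3] at key
    calc (∑ p : T, |δ p|) ^ 2 ≤ (∑ p : T, δ p ^ 2 / ρI p.1 p.2) * ∑ p : T, ρI p.1 p.2 := key
      _ ≤ ε := by
          rw [hsum1, mul_one]; exact hchi'
  have habs : ∑ p : T, |δ p| ≤ Real.sqrt ε := by
    have h0 : 0 ≤ ∑ p : T, |δ p| := Finset.sum_nonneg fun p _ => abs_nonneg _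
    nlinarith [Real.sq_sqrt hε, Real.sqrt_nonneg ε, sq_nonneg (∑ p : T, |δ p| - Real.sqrt ε)]
  have hRmax : 0 ≤ Rmax := by
    by_contra h
    push_neg at h
    -- then every r s a has |r s a| < 0, need nonempty; derive from hρI1
    rcases Finset.exists_ne_zero_of_sum_ne_zero (by rw [hsum1]; norm_num :
      ∑ p : T, ρI p.1 p.2 ≠ 0) with ⟨p, _, _⟩
    exact absurd (hr p.1 p.2) (by linarith [abs_nonneg (r p.1 p.2)])
  -- value gap
  have hdiff : VE - VI = (1 / (1 - γ)) * ∑ p : T, δ p * r p.1 p.2 := by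
    rw [hVE, hVI, ← mul_sub, Fintype.sum_prod_type]
    congr 1
    rw [← Finset.sum_sub_distrib]
    congr 1; ext s
    rw [← Finset.sum_sub_distrib]
    congr 1; ext a
    rw [hδ]; ring
  rw [hdiff]
  have hbound : ∑ p : T, δ p * r p.1 p.2 ≤ Rmax * Real.sqrt ε := by
    calc ∑ p : T, δ p * r p.1 p.2 ≤ ∑ p : T, |δ p| * Rmax := by
          apply Finset.sum_le_sum
          intro p _
          calc δ p * r p.1 p.2 ≤ |δ p * r p.1 p.2| := le_abs_self _
            _ = |δ p| * |r p.1 p.2| := abs_mul _ _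
            _ ≤ |δ p| * Rmax := mul_le_mul_of_nonneg_left (hr p.1 p.2) (abs_nonneg _)
      _ = Rmax * ∑ p : T, |δ p| := by rw [← Finset.sum_mul]; ring
      _ ≤ Rmax * Real.sqrt ε := mul_le_mul_of_nonneg_left habs hRmax
  calc (1 / (1 - γ)) * ∑ p : T, δ p * r p.1 p.2
      ≤ (1 / (1 - γ)) * (Rmax * Real.sqrt ε) :=
        mul_le_mul_of_nonneg_left hbound (by positivity)
    _ = (Rmax / (1 - γ)) * Real.sqrt ε := by ring
end

section
/- (BC sample complexity, Corollary 1) Let $\pi_E, \pi_I$ be deterministic policies with $\pi_E$ in a finite policy class $\Pi$, and suppose $\pi_I \in \Pi$ perfectly fits $m$ i.i.d. samples $\{(s_i, \pi_E(s_i))\}_{i=1}^m$ with $s_i \sim d_{\pi_E}$. Then for any $\delta \in (0,1)$, with probability at least $1-\delta$: $V_{\pi_E} - V_{\pi_I} \le \frac{2 R_{\max}}{(1-\gamma)^2}\left(\frac{\log|\Pi|}{m} + \frac{\log(1/\delta)}{m}\right)$. -/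
open Matrix BigOperators Classical
set_option linter.unusedSectionVars false
set_option linter.unusedVariables false

/-- State-transition matrix of a deterministic policy. -/
noncomputable def detTrans {S A : Type*} [Fintype S] [Fintype A]
    (M : S → A → S → ℝ) (p : S → A) : Matrix S S ℝ :=
  fun s' s => M s (p s) s'

/-- Discounted stationary state distribution of a deterministic policy. -/
noncomputable def detStateDist {S A : Type*} [Fintype S] [Fintype A] [DecidableEq S]
    (M : S → A → S → ℝ) (d0 : S → ℝ) (γ : ℝ) (p : S → A) : S → ℝ :=
  fun s => (1 - γ) * ∑' t : ℕ, γ ^ t * ((detTrans M p ^ t).mulVec d0 s)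

/-- Discounted value of a deterministic policy. -/
noncomputable def detValue {S A : Type*} [Fintype S] [Fintype A] [DecidableEq S]
    (M : S → A → S → ℝ) (d0 : S → ℝ) (γ : ℝ) (r : S → A → ℝ) (p : S → A) : ℝ :=
  (1 / (1 - γ)) * ∑ s, detStateDist M d0 γ p s * r s (p s)

section Helpers
variable {S A : Type*} [Fintype S] [Fintype A] [DecidableEq S] [DecidableEq A]
variable {M : S → A → S → ℝ} {d0 : S → ℝ} {γ : ℝ}

lemma detTrans_apply (M : S → A → S → ℝ) (p : S → A) (s' s : S) :
    detTrans M p s' s = M s (p s) s' := rfl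

lemma powVec_props (hM0 : ∀ s a s', 0 ≤ M s a s') (hM1 : ∀ s a, ∑ s', M s a s' = 1)
    (hd00 : ∀ s, 0 ≤ d0 s) (hd01 : ∑ s, d0 s = 1) (p : S → A) (t : ℕ) :
    (∀ s, 0 ≤ (detTrans M p ^ t).mulVec d0 s) ∧
      ∑ s, (detTrans M p ^ t).mulVec d0 s = 1 := by
  induction t with
  | zero => simpa [Matrix.one_mulVec] using ⟨hd00, hd01⟩
  | succ t ih =>
    have hstep : (detTrans M p ^ (t+1)).mulVec d0
        = (detTrans M p).mulVec ((detTrans M p ^ t).mulVec d0) := by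
      rw [pow_succ', ← Matrix.mulVec_mulVec]
    constructor
    · intro s
      rw [hstep]
      exact Finset.sum_nonneg fun s'' _ => mul_nonneg (hM0 _ _ _) (ih.1 s'')
    · rw [hstep]
      simp only [Matrix.mulVec, dotProduct, detTrans]
      rw [Finset.sum_comm]
      calc ∑ s'', ∑ s, M s'' (p s'') s * (detTrans M p ^ t).mulVec d0 s''
          = ∑ s'', (detTrans M p ^ t).mulVec d0 s'' := by
            refine Finset.sum_congr rfl fun s'' _ => ?_
            rw [← Finset.sum_mul, hM1, one_mul]
        _ = 1 := ih.2

variable (hγ0 : 0 ≤ γ) (hγ1 : γ < 1)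
    (hM0 : ∀ s a s', 0 ≤ M s a s') (hM1 : ∀ s a, ∑ s', M s a s' = 1)
    (hd00 : ∀ s, 0 ≤ d0 s) (hd01 : ∑ s, d0 s = 1)

include hγ0 hγ1 hM0 hM1 hd00 hd01

lemma summable_aux (p : S → A) (s : S) :
    Summable (fun t : ℕ => γ ^ t * ((detTrans M p ^ t).mulVec d0 s)) := by
  refine Summable.of_nonneg_of_le
    (fun t => mul_nonneg (pow_nonneg hγ0 t) ((powVec_props hM0 hM1 hd00 hd01 p t).1 s))
    (fun t => ?_) (summable_geometric_of_lt_one hγ0 hγ1)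
  have hle : (detTrans M p ^ t).mulVec d0 s ≤ 1 := by
    rw [← (powVec_props hM0 hM1 hd00 hd01 p t).2]
    exact Finset.single_le_sum (fun s' _ => (powVec_props hM0 hM1 hd00 hd01 p t).1 s')
      (Finset.mem_univ s)
  calc γ ^ t * (detTrans M p ^ t).mulVec d0 s ≤ γ ^ t * 1 :=
        mul_le_mul_of_nonneg_left hle (pow_nonneg hγ0 t)
    _ = γ ^ t := mul_one _

lemma dist_nonneg' (p : S → A) (s : S) : 0 ≤ detStateDist M d0 γ p s :=
  mul_nonneg (by linarith) (tsum_nonneg fun t =>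
    mul_nonneg (pow_nonneg hγ0 t) ((powVec_props hM0 hM1 hd00 hd01 p t).1 s))

lemma dist_sum_one (p : S → A) : ∑ s, detStateDist M d0 γ p s = 1 := by
  have h1γ : (1 : ℝ) - γ ≠ 0 := by linarith
  unfold detStateDist
  rw [← Finset.mul_sum, ← Summable.tsum_finsetSum (fun s _ => summable_aux hγ0 hγ1 hM0 hM1 hd00 hd01 p s)]
  have : ∀ t : ℕ, ∑ s, γ ^ t * ((detTrans M p ^ t).mulVec d0 s) = γ ^ t := by
    intro t
    rw [← Finset.mul_sum, (powVec_props hM0 hM1 hd00 hd01 p t).2, mul_one]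
  rw [tsum_congr this, tsum_geometric_of_lt_one hγ0 hγ1, mul_inv_cancel₀ h1γ]

lemma dist_rec (p : S → A) (s : S) :
    detStateDist M d0 γ p s
      = (1 - γ) * d0 s + γ * ∑ s'', detTrans M p s s'' * detStateDist M d0 γ p s'' := by
  have hsum := summable_aux hγ0 hγ1 hM0 hM1 hd00 hd01 p
  have hstep : ∀ t : ℕ, (detTrans M p ^ (t+1)).mulVec d0
      = (detTrans M p).mulVec ((detTrans M p ^ t).mulVec d0) := by
    intro t; rw [pow_succ', ← Matrix.mulVec_mulVec]
  have key : ∀ t : ℕ, γ ^ (t+1) * ((detTrans M p ^ (t+1)).mulVec d0 s)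
      = ∑ s'', (γ * detTrans M p s s'') * (γ ^ t * ((detTrans M p ^ t).mulVec d0 s'')) := by
    intro t
    rw [hstep t]
    simp only [Matrix.mulVec, dotProduct]
    rw [Finset.mul_sum]
    exact Finset.sum_congr rfl fun s'' _ => by ring
  unfold detStateDist
  rw [Summable.tsum_eq_zero_add (hsum s)]
  simp only [pow_zero, one_mul, pow_zero, Matrix.one_mulVec]
  rw [tsum_congr key, Summable.tsum_finsetSum (fun s'' _ => ((hsum s'').mul_left _))]
  have : ∀ s'' : S, ∑' t : ℕ, (γ * detTrans M p s s'') * (γ ^ t * ((detTrans M p ^ t).mulVec d0 s''))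
      = (γ * detTrans M p s s'') * ∑' t : ℕ, γ ^ t * ((detTrans M p ^ t).mulVec d0 s'') :=
    fun s'' => tsum_mul_left
  rw [Finset.sum_congr rfl fun s'' _ => this s'', mul_add]
  congr 1
  rw [Finset.mul_sum, Finset.mul_sum]
  exact Finset.sum_congr rfl fun s'' _ => by ring


lemma value_gap {Rmax : ℝ} {r : S → A → ℝ} (hr : ∀ s a, |r s a| ≤ Rmax) (hR : 0 ≤ Rmax)
    (πE p : S → A) :
    detValue M d0 γ r πE - detValue M d0 γ r p ≤
      (2 * Rmax / (1 - γ) ^ 2) *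
        ∑ s ∈ Finset.univ.filter (fun s => p s ≠ πE s), detStateDist M d0 γ πE s := by
  have h1γ : (0:ℝ) < 1 - γ := by linarith
  set dE := detStateDist M d0 γ πE with hdE
  set dI := detStateDist M d0 γ p with hdI
  set L := ∑ s ∈ Finset.univ.filter (fun s => p s ≠ πE s), dE s with hLdef
  have hdE0 : ∀ s, 0 ≤ dE s := dist_nonneg' hγ0 hγ1 hM0 hM1 hd00 hd01 πE
  have hdI0 : ∀ s, 0 ≤ dI s := dist_nonneg' hγ0 hγ1 hM0 hM1 hd00 hd01 p
  have hL0 : 0 ≤ L := Finset.sum_nonneg fun s _ => hdE0 s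
  -- column sums of transition matrices
  have hcolI : ∀ s'', ∑ s, detTrans M p s s'' = 1 := fun s'' => hM1 s'' (p s'')
  -- difference recursion
  have hDs : ∀ s, dE s - dI s
      = γ * ∑ s'', (detTrans M πE s s'' * dE s'' - detTrans M p s s'' * dI s'') := by
    intro s
    rw [hdE, hdI, dist_rec hγ0 hγ1 hM0 hM1 hd00 hd01 πE s,
      dist_rec hγ0 hγ1 hM0 hM1 hd00 hd01 p s, Finset.sum_sub_distrib]
    ring
  have habs : ∀ s, |dE s - dI s|
      ≤ γ * ∑ s'', (detTrans M p s s'' * |dE s'' - dI s''|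
          + |detTrans M πE s s'' - detTrans M p s s''| * dE s'') := by
    intro s
    rw [hDs s, abs_mul, abs_of_nonneg hγ0]
    refine mul_le_mul_of_nonneg_left ?_ hγ0
    refine (Finset.abs_sum_le_sum_abs _ _).trans (Finset.sum_le_sum fun s'' _ => ?_)
    have hid : detTrans M πE s s'' * dE s'' - detTrans M p s s'' * dI s''
        = detTrans M p s s'' * (dE s'' - dI s'')
          + (detTrans M πE s s'' - detTrans M p s s'') * dE s'' := by ring
    rw [hid]
    refine (abs_add_le _ _).trans ?_
    simp only [detTrans_apply]
    rw [abs_mul, abs_mul, abs_of_nonneg (hM0 _ _ _), abs_of_nonneg (hdE0 s'')]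
  -- mismatch cost bound
  have hc : ∀ s'', ∑ s, |detTrans M πE s s'' - detTrans M p s s''|
      ≤ (if p s'' = πE s'' then (0:ℝ) else 2) := by
    intro s''
    simp only [detTrans_apply]
    by_cases h : p s'' = πE s''
    · simp [h]
    · rw [if_neg h]
      calc ∑ s, |M s'' (πE s'') s - M s'' (p s'') s|
          ≤ ∑ s, (M s'' (πE s'') s + M s'' (p s'') s) := by
            refine Finset.sum_le_sum fun s _ => ?_
            refine (abs_sub _ _).trans ?_
            rw [abs_of_nonneg (hM0 _ _ _), abs_of_nonneg (hM0 _ _ _)]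
        _ = 2 := by rw [Finset.sum_add_distrib, hM1, hM1]; norm_num
  -- total variation bound
  set TV := ∑ s, |dE s - dI s| with hTVdef
  have hTV0 : 0 ≤ TV := Finset.sum_nonneg fun s _ => abs_nonneg _
  have hTVle : TV ≤ γ * (TV + 2 * L) := by
    calc TV ≤ ∑ s, γ * ∑ s'', (detTrans M p s s'' * |dE s'' - dI s''|
            + |detTrans M πE s s'' - detTrans M p s s''| * dE s'') :=
          Finset.sum_le_sum fun s _ => habs s
      _ = γ * ((∑ s, ∑ s'', detTrans M p s s'' * |dE s'' - dI s''|)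
            + ∑ s, ∑ s'', |detTrans M πE s s'' - detTrans M p s s''| * dE s'') := by
          rw [← Finset.mul_sum, ← Finset.sum_add_distrib]
          congr 1
          exact Finset.sum_congr rfl fun s _ => Finset.sum_add_distrib
      _ ≤ γ * (TV + 2 * L) := by
          refine mul_le_mul_of_nonneg_left ?_ hγ0
          have h1 : (∑ s, ∑ s'', detTrans M p s s'' * |dE s'' - dI s''|) = TV := by
            rw [Finset.sum_comm]
            refine Finset.sum_congr rfl fun s'' _ => ?_
            rw [← Finset.sum_mul, hcolI, one_mul]
          have h2 : (∑ s, ∑ s'', |detTrans M πE s s'' - detTrans M p s s''| * dE s'')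
              ≤ 2 * L := by
            rw [Finset.sum_comm]
            calc ∑ s'', ∑ s, |detTrans M πE s s'' - detTrans M p s s''| * dE s''
                = ∑ s'', (∑ s, |detTrans M πE s s'' - detTrans M p s s''|) * dE s'' := by
                  exact Finset.sum_congr rfl fun s'' _ => (Finset.sum_mul _ _ _).symm
              _ ≤ ∑ s'', (if p s'' = πE s'' then (0:ℝ) else 2) * dE s'' :=
                  Finset.sum_le_sum fun s'' _ =>
                    mul_le_mul_of_nonneg_right (hc s'') (hdE0 s'')
              _ = 2 * L := by
                  rw [hLdef, Finset.mul_sum, Finset.sum_filter]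
                  refine Finset.sum_congr rfl fun s'' _ => ?_
                  by_cases h : p s'' = πE s'' <;> simp [h]
          linarith
  have hTVfin : TV ≤ 2 * γ * L / (1 - γ) := by
    rw [le_div_iff₀ h1γ]
    nlinarith
  -- value decomposition
  have hval : detValue M d0 γ r πE - detValue M d0 γ r p
      = (1 / (1 - γ)) * ∑ s, (dE s * (r s (πE s) - r s (p s)) + (dE s - dI s) * r s (p s)) := by
    unfold detValue
    rw [← mul_sub, ← Finset.sum_sub_distrib]
    congr 1
    exact Finset.sum_congr rfl fun s _ => by ring
  rw [hval]
  have hsummand : ∀ s, dE s * (r s (πE s) - r s (p s)) + (dE s - dI s) * r s (p s)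
      ≤ (if p s = πE s then (0:ℝ) else 2 * Rmax * dE s) + |dE s - dI s| * Rmax := by
    intro s
    have h2 : (dE s - dI s) * r s (p s) ≤ |dE s - dI s| * Rmax := by
      calc (dE s - dI s) * r s (p s) ≤ |(dE s - dI s) * r s (p s)| := le_abs_self _
        _ = |dE s - dI s| * |r s (p s)| := abs_mul _ _
        _ ≤ |dE s - dI s| * Rmax := mul_le_mul_of_nonneg_left (hr _ _) (abs_nonneg _)
    by_cases h : p s = πE s
    · rw [if_pos h, h]
      have h2' : (dE s - dI s) * r s (πE s) ≤ |dE s - dI s| * Rmax := by rw [← h]; exact h2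
      simpa using h2'
    · rw [if_neg h]
      have h1 : dE s * (r s (πE s) - r s (p s)) ≤ 2 * Rmax * dE s := by
        have : r s (πE s) - r s (p s) ≤ 2 * Rmax := by
          have ha := abs_le.mp (hr s (πE s))
          have hb := abs_le.mp (hr s (p s))
          linarith [ha.2, hb.1]
        nlinarith [hdE0 s]
      linarith
  have hsum : ∑ s, (dE s * (r s (πE s) - r s (p s)) + (dE s - dI s) * r s (p s))
      ≤ 2 * Rmax * L + Rmax * TV := by
    calc ∑ s, (dE s * (r s (πE s) - r s (p s)) + (dE s - dI s) * r s (p s))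
        ≤ ∑ s, ((if p s = πE s then (0:ℝ) else 2 * Rmax * dE s) + |dE s - dI s| * Rmax) :=
          Finset.sum_le_sum fun s _ => hsummand s
      _ = 2 * Rmax * L + Rmax * TV := by
          rw [Finset.sum_add_distrib, hLdef, hTVdef, Finset.mul_sum, Finset.mul_sum,
            Finset.sum_filter]
          congr 1
          · refine Finset.sum_congr rfl fun s _ => ?_
            by_cases h : p s = πE s <;> simp [h]
          · exact Finset.sum_congr rfl fun s _ => mul_comm _ _
  have hfinal : (1 / (1 - γ)) * (2 * Rmax * L + Rmax * TV)
      ≤ (2 * Rmax / (1 - γ) ^ 2) * L := by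
    have : 2 * Rmax * L + Rmax * TV ≤ 2 * Rmax * L + Rmax * (2 * γ * L / (1 - γ)) := by
      have := mul_le_mul_of_nonneg_left hTVfin hR
      linarith
    have heq : (1 / (1 - γ)) * (2 * Rmax * L + Rmax * (2 * γ * L / (1 - γ)))
        = (2 * Rmax / (1 - γ) ^ 2) * L := by
      field_simp
      ring
    calc (1 / (1 - γ)) * (2 * Rmax * L + Rmax * TV)
        ≤ (1 / (1 - γ)) * (2 * Rmax * L + Rmax * (2 * γ * L / (1 - γ))) :=
          mul_le_mul_of_nonneg_left this (by positivity)
      _ = (2 * Rmax / (1 - γ) ^ 2) * L := heq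
  calc (1 / (1 - γ)) * ∑ s, (dE s * (r s (πE s) - r s (p s)) + (dE s - dI s) * r s (p s))
      ≤ (1 / (1 - γ)) * (2 * Rmax * L + Rmax * TV) :=
        mul_le_mul_of_nonneg_left hsum (by positivity)
    _ ≤ (2 * Rmax / (1 - γ) ^ 2) * L := hfinal

end Helpers

/-- BC sample complexity (Corollary 1): with probability at least `1-δ` over `m`
i.i.d. samples from `d_πE`, any policy in the finite class `Π` consistent with the
expert on the sample has value gap at most
`2 R_max/(1-γ)² (log|Π|/m + log(1/δ)/m)`. -/
theorem bc_sample_complexity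
    {S A : Type*} [Fintype S] [Fintype A] [DecidableEq S] [DecidableEq A]
    (M : S → A → S → ℝ) (d0 : S → ℝ) (γ Rmax : ℝ) (r : S → A → ℝ)
    (hγ0 : 0 ≤ γ) (hγ1 : γ < 1)
    (hM0 : ∀ s a s', 0 ≤ M s a s') (hM1 : ∀ s a, ∑ s', M s a s' = 1)
    (hd00 : ∀ s, 0 ≤ d0 s) (hd01 : ∑ s, d0 s = 1)
    (hr : ∀ s a, |r s a| ≤ Rmax)
    (Pol : Finset (S → A)) (πE : S → A) (hπE : πE ∈ Pol)
    (m : ℕ) (hm : 0 < m)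
    (πI : (Fin m → S) → (S → A))
    (hmem : ∀ f, πI f ∈ Pol)
    (hfit : ∀ f i, πI f (f i) = πE (f i))
    (δ : ℝ) (hδ0 : 0 < δ) (hδ1 : δ < 1) :
    1 - δ ≤ ∑ f : Fin m → S,
      (∏ i, detStateDist M d0 γ πE (f i)) *
        (if detValue M d0 γ r πE - detValue M d0 γ r (πI f)
            ≤ (2 * Rmax / (1 - γ) ^ 2) *
              (Real.log (Pol.card) / m + Real.log (1 / δ) / m)
          then 1 else 0) := by
  classical
  have hSne : Nonempty S := by
    by_contra h
    rw [not_nonempty_iff] at h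
    rw [Finset.univ_eq_empty, Finset.sum_empty] at hd01
    norm_num at hd01
  obtain ⟨s0⟩ := hSne
  have hR : (0:ℝ) ≤ Rmax := le_trans (abs_nonneg _) (hr s0 (πE s0))
  have h1γ : (0:ℝ) < 1 - γ := by linarith
  set d := detStateDist M d0 γ πE with hd
  have hd0 : ∀ s, 0 ≤ d s := dist_nonneg' hγ0 hγ1 hM0 hM1 hd00 hd01 πE
  have hd1 : ∑ s, d s = 1 := dist_sum_one hγ0 hγ1 hM0 hM1 hd00 hd01 πE
  set ε := Real.log (Pol.card) / m + Real.log (1 / δ) / m with hε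
  set C := 2 * Rmax / (1 - γ) ^ 2 with hC
  have hC0 : 0 ≤ C := by positivity
  set Lf : (S → A) → ℝ := fun p => ∑ s ∈ Finset.univ.filter (fun s => p s ≠ πE s), d s with hLf
  have hL0 : ∀ p, 0 ≤ Lf p := fun p => Finset.sum_nonneg fun s _ => hd0 s
  have hL1 : ∀ p : S → A, Lf p ≤ 1 := by
    intro p
    rw [← hd1]
    exact Finset.sum_le_sum_of_subset_of_nonneg (Finset.filter_subset _ _) fun s _ _ => hd0 s
  have hN : (0:ℝ) < Pol.card := by exact_mod_cast Finset.card_pos.mpr ⟨πE, hπE⟩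
  have hm' : ((m:ℝ)) ≠ 0 := Nat.cast_ne_zero.mpr hm.ne'
  have hPnn : ∀ f : Fin m → S, 0 ≤ ∏ i, d (f i) := fun f =>
    Finset.prod_nonneg fun i _ => hd0 (f i)
  have hPsum : ∑ f : Fin m → S, ∏ i, d (f i) = 1 := by
    rw [← Fintype.sum_pow d m, hd1, one_pow]
  -- pointwise: small risk implies small value gap
  have hptw : ∀ f : Fin m → S,
      (if Lf (πI f) ≤ ε then (1:ℝ) else 0)
        ≤ (if detValue M d0 γ r πE - detValue M d0 γ r (πI f) ≤ C * ε then (1:ℝ) else 0) := by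
    intro f
    by_cases h : Lf (πI f) ≤ ε
    · rw [if_pos h]
      have hg := value_gap hγ0 hγ1 hM0 hM1 hd00 hd01 hr hR πE (πI f)
      have hle : detValue M d0 γ r πE - detValue M d0 γ r (πI f) ≤ C * ε :=
        hg.trans (mul_le_mul_of_nonneg_left h hC0)
      rw [if_pos hle]
    · rw [if_neg h]
      split <;> norm_num
  -- the bad event bound
  set Bad := Pol.filter (fun p => ¬ Lf p ≤ ε) with hBad
  have hbound : ∀ f : Fin m → S, (if ¬ Lf (πI f) ≤ ε then (1:ℝ) else 0)
      ≤ ∑ p ∈ Bad, ∏ i, (if p (f i) = πE (f i) then (1:ℝ) else 0) := by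
    intro f
    by_cases h : Lf (πI f) ≤ ε
    · rw [if_neg (not_not_intro h)]
      exact Finset.sum_nonneg fun p _ =>
        Finset.prod_nonneg fun i _ => by split <;> norm_num
    · rw [if_pos h]
      have hmem' : πI f ∈ Bad := Finset.mem_filter.mpr ⟨hmem f, h⟩
      have hterm : ∏ i, (if πI f (f i) = πE (f i) then (1:ℝ) else 0) = 1 := by
        simp [hfit f]
      calc (1:ℝ) = ∏ i, (if πI f (f i) = πE (f i) then (1:ℝ) else 0) := hterm.symm
        _ ≤ ∑ p ∈ Bad, ∏ i, (if p (f i) = πE (f i) then (1:ℝ) else 0) :=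
          Finset.single_le_sum
            (f := fun p => ∏ i, (if p (f i) = πE (f i) then (1:ℝ) else 0))
            (fun p _ => Finset.prod_nonneg fun i _ => by split <;> norm_num) hmem'
  have hps : ∀ p : S → A, ∑ s, d s * (if p s = πE s then (1:ℝ) else 0) = 1 - Lf p := by
    intro p
    have hterm : ∀ s, d s * (if p s = πE s then (1:ℝ) else 0)
        = d s - (if p s ≠ πE s then d s else 0) := by
      intro s; by_cases h : p s = πE s <;> simp [h]
    rw [Finset.sum_congr rfl fun s _ => hterm s, Finset.sum_sub_distrib, hd1,
      ← Finset.sum_filter]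
  have hεm : ε * m = Real.log (Pol.card) + Real.log (1 / δ) := by
    rw [hε]; field_simp
  have hexp : Real.exp (-ε) ^ m = (Pol.card : ℝ)⁻¹ * δ := by
    rw [← Real.exp_nat_mul]
    have hx : (m:ℝ) * (-ε) = -Real.log (Pol.card) + -Real.log (1 / δ) := by
      have := hεm; nlinarith [hεm]
    rw [hx, Real.exp_add, Real.exp_neg, Real.exp_neg, Real.exp_log hN,
      Real.exp_log (by positivity : (0:ℝ) < 1 / δ), one_div, inv_inv]
  have hB : ∑ f : Fin m → S, (∏ i, d (f i)) * (if ¬ Lf (πI f) ≤ ε then (1:ℝ) else 0) ≤ δ := by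
    calc ∑ f : Fin m → S, (∏ i, d (f i)) * (if ¬ Lf (πI f) ≤ ε then (1:ℝ) else 0)
        ≤ ∑ f : Fin m → S, (∏ i, d (f i))
            * ∑ p ∈ Bad, ∏ i, (if p (f i) = πE (f i) then (1:ℝ) else 0) :=
          Finset.sum_le_sum fun f _ => mul_le_mul_of_nonneg_left (hbound f) (hPnn f)
      _ = ∑ p ∈ Bad, ∑ f : Fin m → S, ∏ i, (d (f i) * (if p (f i) = πE (f i) then (1:ℝ) else 0)) := by
          simp_rw [Finset.mul_sum]
          rw [Finset.sum_comm]
          refine Finset.sum_congr rfl fun p _ => Finset.sum_congr rfl fun f _ => ?_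
          rw [← Finset.prod_mul_distrib]
      _ = ∑ p ∈ Bad, (∑ s, d s * (if p s = πE s then (1:ℝ) else 0)) ^ m := by
          refine Finset.sum_congr rfl fun p _ => ?_
          rw [Fintype.sum_pow]
      _ ≤ ∑ _p ∈ Bad, Real.exp (-ε) ^ m := by
          refine Finset.sum_le_sum fun p hp => ?_
          rw [hps p]
          have hbad : ¬ Lf p ≤ ε := (Finset.mem_filter.mp hp).2
          have hεlt : ε < Lf p := lt_of_not_ge hbad
          have h0 : (0:ℝ) ≤ 1 - Lf p := by linarith [hL1 p]
          have h1 : 1 - Lf p ≤ Real.exp (-ε) := by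
            have := Real.add_one_le_exp (-ε)
            linarith
          exact pow_le_pow_left₀ h0 h1 m
      _ = (Bad.card : ℝ) * ((Pol.card : ℝ)⁻¹ * δ) := by
          rw [Finset.sum_const, hexp, nsmul_eq_mul]
      _ ≤ (Pol.card : ℝ) * ((Pol.card : ℝ)⁻¹ * δ) := by
          refine mul_le_mul_of_nonneg_right ?_ (by positivity)
          exact_mod_cast Finset.card_filter_le _ _
      _ = δ := by
          rw [← mul_assoc, mul_inv_cancel₀ hN.ne', one_mul]
  have hsplit : ∀ f : Fin m → S,
      (∏ i, d (f i)) * (if Lf (πI f) ≤ ε then (1:ℝ) else 0)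
        = (∏ i, d (f i)) - (∏ i, d (f i)) * (if ¬ Lf (πI f) ≤ ε then (1:ℝ) else 0) := by
    intro f
    by_cases h : Lf (πI f) ≤ ε <;> simp [h]
  calc 1 - δ
      ≤ 1 - ∑ f : Fin m → S, (∏ i, d (f i)) * (if ¬ Lf (πI f) ≤ ε then (1:ℝ) else 0) := by
        linarith
    _ = ∑ f : Fin m → S, (∏ i, d (f i)) * (if Lf (πI f) ≤ ε then (1:ℝ) else 0) := by
        rw [Finset.sum_congr rfl fun f _ => hsplit f, Finset.sum_sub_distrib, hPsum]
    _ ≤ _ := Finset.sum_le_sum fun f _ => mul_le_mul_of_nonneg_left (hptw f) (hPnn f)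
end
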